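/- Let V be an m-ordered orthogonal preserving PSO with V(e_i) = e_i for all i ∈ ℕ. Then V maps the boundary of S into the boundary of S, and maps the relative interior of S (sequences with all coordinates positive) into the relative interior of S. -/

import Mathlib

/-- The m-ordered polynomial operator associated to a hypermatrix `P`. -/
noncomputable def psoV (m : ℕ) (P : (Fin m → ℕ) → ℕ → ℝ) (x : ℕ → ℝ) (k : ℕ) : ℝ :=
  ∑' i : Fin m → ℕ, P i k * ∏ j, x (i j)

/-- The hypermatrix is stochastic. -/
def IsStochastic (m : ℕ) (P : (Fin m → ℕ) → ℕ → ℝ) : Prop :=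
  (∀ i k, 0 ≤ P i k) ∧ ∀ i, HasSum (fun k => P i k) 1

/-- symmetry of the hypermatrix in its first m indices. -/
def HypSymm (m : ℕ) (P : (Fin m → ℕ) → ℕ → ℝ) : Prop :=
  ∀ (σ : Equiv.Perm (Fin m)) (i : Fin m → ℕ) (k : ℕ), P (i ∘ σ) k = P i k

/-- membership in the infinite-dimensional simplex S. -/
def inS (x : ℕ → ℝ) : Prop := (∀ i, 0 ≤ x i) ∧ HasSum x 1

/-- the standard basis vector e_i. -/
def stdBasis (i : ℕ) : ℕ → ℝ := fun n => if n = i then 1 else 0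

/-- x and y are orthogonal: disjoint supports. -/
def Orth (x y : ℕ → ℝ) : Prop := ∀ k, x k * y k = 0

/-- V is orthogonal preserving on S. -/
def IsOP (m : ℕ) (P : (Fin m → ℕ) → ℕ → ℝ) : Prop :=
  ∀ x y : ℕ → ℝ, inS x → inS y → Orth x y → Orth (psoV m P x) (psoV m P y)

/-- V is surjective on S. -/
def SurjOnS (m : ℕ) (P : (Fin m → ℕ) → ℕ → ℝ) : Prop :=
  ∀ y : ℕ → ℝ, inS y → ∃ x : ℕ → ℝ, inS x ∧ psoV m P x = y

/-!
Both claims only involve the diagonal entries `P (i, …, i) i`, which equal `1` because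
`V(e_i) = e_i`. If `x_i = 0` then `x ⟂ e_i`, so `V(x) ⟂ V(e_i) = e_i`, i.e. `V(x)_i = 0`.
If all `x_k > 0`, then the diagonal term alone gives `V(x)_k ≥ P (k, …, k) k · x_k ^ m = x_k ^ m > 0`.
That `V` maps `S` into `S` is a Tonelli-type rearrangement of the nonnegative double series
`∑_{i,k} P_{i,k} ∏_j x_{i_j}`.
-/

lemma hasSum_prod_of_nonneg {α β : Type*} {f : α × β → ℝ} (hf : 0 ≤ f) {g : α → ℝ} {s : ℝ}
    (hfib : ∀ a, HasSum (fun b => f (a, b)) (g a)) (hg : HasSum g s) : HasSum f s := by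
  obtain ⟨t, ht⟩ : Summable f := (summable_prod_of_nonneg hf).2
    ⟨fun a => (hfib a).summable, hg.summable.congr fun a => (hfib a).tsum_eq.symm⟩
  rwa [(ht.prod_fiberwise hfib).unique hg] at ht

lemma hasSum_prod_comp_pi {β : Type*} {x : β → ℝ} (hx0 : 0 ≤ x) {a : ℝ} (hx : HasSum x a)
    (m : ℕ) : HasSum (fun i : Fin m → β => ∏ j, x (i j)) (a ^ m) := by
  induction m with
  | zero => simp
  | succ n ih =>
    have hprod : HasSum (fun p : β × (Fin n → β) => x p.1 * ∏ j, x (p.2 j)) (a ^ (n + 1)) := by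
      refine hasSum_prod_of_nonneg (fun p => ?_) (fun b => ih.mul_left (x b)) ?_
      · exact mul_nonneg (hx0 _) (Finset.prod_nonneg fun j _ => hx0 _)
      · simpa [pow_succ'] using hx.mul_right (a ^ n)
    refine ((Fin.consEquiv fun _ : Fin (n + 1) => β).hasSum_iff).1 (hprod.congr_fun fun p => ?_)
    simp [Fin.consEquiv, Fin.prod_univ_succ]

section Stochastic

variable {m : ℕ} {P : (Fin m → ℕ) → ℕ → ℝ} {x : ℕ → ℝ}

lemma psoV_term_nonneg (hP : IsStochastic m P) (hx : inS x) (i : Fin m → ℕ) (k : ℕ) :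
    0 ≤ P i k * ∏ j, x (i j) :=
  mul_nonneg (hP.1 i k) (Finset.prod_nonneg fun _ _ => hx.1 _)

lemma hasSum_psoV_terms (hP : IsStochastic m P) (hx : inS x) :
    HasSum (fun p : ℕ × (Fin m → ℕ) => P p.2 p.1 * ∏ j, x (p.2 j)) 1 := by
  have hterm : (0 : (Fin m → ℕ) × ℕ → ℝ) ≤ fun p => P p.1 p.2 * ∏ j, x (p.1 j) :=
    fun p => psoV_term_nonneg hP hx p.1 p.2
  have hfib (i : Fin m → ℕ) : HasSum (fun k => P i k * ∏ j, x (i j)) (∏ j, x (i j)) := by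
    simpa only [one_mul] using (hP.2 i).mul_right (∏ j, x (i j))
  have hprod : HasSum (fun i : Fin m → ℕ => ∏ j, x (i j)) 1 := by
    simpa only [one_pow] using hasSum_prod_comp_pi hx.1 hx.2 m
  have hjoint := hasSum_prod_of_nonneg hterm hfib hprod
  exact (Equiv.prodComm (Fin m → ℕ) ℕ).hasSum_iff.1 hjoint

lemma summable_psoV_terms (hP : IsStochastic m P) (hx : inS x) (k : ℕ) :
    Summable fun i : Fin m → ℕ => P i k * ∏ j, x (i j) :=
  (hasSum_psoV_terms hP hx).summable.prod_factor k

lemma psoV_inS (hP : IsStochastic m P) (hx : inS x) : inS (psoV m P x) :=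
  ⟨fun _ => tsum_nonneg fun i => psoV_term_nonneg hP hx i _,
    (hasSum_psoV_terms hP hx).prod_fiberwise fun k => (summable_psoV_terms hP hx k).hasSum⟩

lemma pow_le_psoV_apply (hP : IsStochastic m P) (hx : inS x) {k : ℕ}
    (hdiag : P (fun _ => k) k = 1) : x k ^ m ≤ psoV m P x k := by
  have hle := (summable_psoV_terms hP hx k).le_tsum (fun _ => k)
    fun i _ => psoV_term_nonneg hP hx i k
  simpa [psoV, hdiag] using hle

end Stochastic

lemma inS_stdBasis (i : ℕ) : inS (stdBasis i) :=
  ⟨fun n => by by_cases h : n = i <;> simp [stdBasis, h], hasSum_ite_eq i 1⟩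

lemma prod_stdBasis_comp {m : ℕ} (i : ℕ) (f : Fin m → ℕ) :
    ∏ j, stdBasis i (f j) = if f = fun _ => i then 1 else 0 := by
  split_ifs with h
  · simp [h, stdBasis]
  · obtain ⟨j, hj⟩ : ∃ j, f j ≠ i := by
      by_contra! hc
      exact h (funext hc)
    exact Finset.prod_eq_zero (Finset.mem_univ j) (by simp [stdBasis, hj])

lemma psoV_stdBasis_apply (m : ℕ) (P : (Fin m → ℕ) → ℕ → ℝ) (i k : ℕ) :
    psoV m P (stdBasis i) k = P (fun _ => i) k := by
  rw [psoV, tsum_eq_single fun _ => i]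
  · simp [stdBasis]
  · intro f hf
    simp [prod_stdBasis_comp, hf]

lemma orth_stdBasis_of_apply_eq_zero {x : ℕ → ℝ} {i : ℕ} (hxi : x i = 0) :
    Orth x (stdBasis i) := by
  intro k
  by_cases h : k = i
  · simp [h, hxi]
  · simp [stdBasis, h]

lemma psoV_apply_eq_zero_of_apply_eq_zero {m : ℕ} {P : (Fin m → ℕ) → ℕ → ℝ} (hop : IsOP m P)
    {x : ℕ → ℝ} (hx : inS x) {i : ℕ} (hdiag : P (fun _ => i) i = 1) (hxi : x i = 0) :
    psoV m P x i = 0 := by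
  have h := hop x (stdBasis i) hx (inS_stdBasis i) (orth_stdBasis_of_apply_eq_zero hxi) i
  simpa [psoV_stdBasis_apply, hdiag] using h

theorem stmt5_general (m : ℕ) (P : (Fin m → ℕ) → ℕ → ℝ)
    (hP : IsStochastic m P)
    (hfix : ∀ i : ℕ, psoV m P (stdBasis i) = stdBasis i)
    (hop : IsOP m P) :
    (∀ x : ℕ → ℝ, inS x → (∃ i, x i = 0) → inS (psoV m P x) ∧ ∃ i, psoV m P x i = 0) ∧
    (∀ x : ℕ → ℝ, inS x → (∀ i, 0 < x i) → inS (psoV m P x) ∧ ∀ i, 0 < psoV m P x i) := by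
  have hdiag (i : ℕ) : P (fun _ => i) i = 1 := by
    simpa [psoV_stdBasis_apply, stdBasis] using congrFun (hfix i) i
  refine ⟨fun x hx ⟨i, hxi⟩ => ⟨psoV_inS hP hx, i, ?_⟩, fun x hx hpos => ⟨psoV_inS hP hx, ?_⟩⟩
  · exact psoV_apply_eq_zero_of_apply_eq_zero hop hx (hdiag i) hxi
  · exact fun k => (pow_pos (hpos k) m).trans_le (pow_le_psoV_apply hP hx (hdiag k))

theorem stmt5 (m : ℕ) (hm : 1 ≤ m) (P : (Fin m → ℕ) → ℕ → ℝ)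
    (hP : IsStochastic m P)
    (hfix : ∀ i : ℕ, psoV m P (stdBasis i) = stdBasis i)
    (hop : IsOP m P) :
    (∀ x : ℕ → ℝ, inS x → (∃ i, x i = 0) → inS (psoV m P x) ∧ ∃ i, psoV m P x i = 0) ∧
    (∀ x : ℕ → ℝ, inS x → (∀ i, 0 < x i) → inS (psoV m P x) ∧ ∀ i, 0 < psoV m P x i) :=
  stmt5_general m P hP hfix hop
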